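/- Let X be an invertible symmetric real 3×3 matrix with tr(X^{-1}) ≠ 0. Define L on symmetric trace-free 3×3 matrices by L(φ) = (Xφ + (Xφ)ᵀ)/2 - (tr(Xφ)/3)·Id. If additionally X is definite (positive or negative definite), then L is injective (equivalently, a linear isomorphism of the 5-dimensional space of symmetric trace-free matrices). -/

import Mathlib

open Matrix


lemma aux {n : Type*} [Fintype n] [DecidableEq n] (X φ : Matrix n n ℝ) (hX : X.PosDef)
    (h : (φᵀ * X * φ).trace = 0) : φ = 0 := by
  have key : ∀ j, (φᵀ * X * φ) j j = (fun k => φ k j) ⬝ᵥ X.mulVec (fun k => φ k j) := by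
    intro j
    simp only [Matrix.mul_apply, Matrix.transpose_apply, dotProduct, Matrix.mulVec,
      Finset.mul_sum, Finset.sum_mul]
    rw [Finset.sum_comm]
    exact Finset.sum_congr rfl fun l _ => Finset.sum_congr rfl fun k _ => by ring
  have hnn : ∀ j ∈ Finset.univ, (0:ℝ) ≤ (φᵀ * X * φ) j j := by
    intro j _
    rw [key j]
    simpa using hX.posSemidef.dotProduct_mulVec_nonneg (fun k => φ k j)
  have hz : ∀ j ∈ (Finset.univ : Finset n), (φᵀ * X * φ) j j = 0 :=
    (Finset.sum_eq_zero_iff_of_nonneg hnn).mp h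
  ext i j
  have hv : (fun k => φ k j) = 0 := by
    by_contra hne
    have := hX.dotProduct_mulVec_pos (x := fun k => φ k j) hne
    simp only [star_trivial] at this
    have h0 := hz j (Finset.mem_univ j)
    rw [key j] at h0
    exact absurd h0 (ne_of_gt this)
  simpa using congrFun hv i


/-- Injectivity of the map `L(φ) = S²₀(Xφ)` (symmetric trace-free part of `Xφ`) on symmetric
trace-free 3×3 matrices, for `X` symmetric, invertible, definite, with `tr X⁻¹ ≠ 0`. -/
theorem stmt2 (X : Matrix (Fin 3) (Fin 3) ℝ) (hXsymm : X.IsSymm) (hX : IsUnit X.det)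
    (htr : X⁻¹.trace ≠ 0) (hdef : X.PosDef ∨ (-X).PosDef) :
    ∀ φ : Matrix (Fin 3) (Fin 3) ℝ, φ.IsSymm → φ.trace = 0 →
      (1 / 2 : ℝ) • (X * φ + (X * φ).transpose) - ((X * φ).trace / 3) • (1 : Matrix (Fin 3) (Fin 3) ℝ) = 0 →
      φ = 0 := by
  intro φ hφ hφtr h
  have hT : (X * φ)ᵀ = φ * X := by
    rw [Matrix.transpose_mul, hφ, hXsymm]
  rw [hT] at h
  apply_fun (fun M => (φ * M).trace) at h
  simp only [Matrix.mul_sub, Matrix.mul_add, Matrix.mul_smul, Matrix.mul_one,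
    Matrix.mul_zero, Matrix.trace_zero, Matrix.trace_sub, Matrix.trace_add, Matrix.trace_smul,
    smul_eq_mul, ← Matrix.mul_assoc] at h
  have hcyc : (φ * φ * X).trace = (φ * X * φ).trace := by
    rw [Matrix.mul_assoc, Matrix.trace_mul_comm φ (φ * X)]
  rw [hcyc, hφtr, mul_zero, sub_zero] at h
  have htr0 : (φ * X * φ).trace = 0 := by linarith
  have htr0' : (φᵀ * X * φ).trace = 0 := by rw [hφ]; exact htr0
  rcases hdef with hpd | hpd
  · exact aux X φ hpd htr0'
  · refine aux (-X) φ hpd ?_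
    rw [Matrix.mul_neg, Matrix.neg_mul, Matrix.trace_neg, htr0', neg_zero]
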